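/- arXiv:2501.06815 — 5 statements merged into one kernel-verified Lean document; each statement's English description precedes it below -/
import Mathlib

section
/- Let $\mathbf F^S$ be a symmetric consistent two-point flux satisfying the entropy conservation condition $(\mathbf V_R-\mathbf V_L)^T\mathbf F^S(\mathbf U_L,\mathbf U_R)=(\psi_R-\psi_L)-(\phi_R-\phi_L)\frac{B_{x,R}+B_{x,L}}{2}$ for all states. Then for any nodal values $\{\mathbf U_{i_1}\}_{i_1=0}^{k+1}$ with entropy variables $\mathbf V_{i_1}$, and $S=MD$ the Gauss–Lobatto SBP stiffness matrix, $\sum_{i_1,l}(S_{i_1,l}-S_{l,i_1})\,\mathbf V_{i_1}^T\mathbf F^S(\mathbf U_{i_1},\mathbf U_l) = -\sum_{i_1}\tau_{i_1}\psi_{i_1} - \sum_{i_1,l}\phi_{i_1}B_{x,l}S_{i_1,l} + \sum_{i_1}\tau_{i_1}\phi_{i_1}B_{x,i_1}$, where $\tau_{i_1}$ is the SBP boundary vector $(-1,0,\dots,0,1)$. -/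
open Matrix

/-- Key algebraic identity in the proof of semi-discrete entropy conservation:
for a symmetric two-point flux `FS` satisfying the entropy conservation
condition, and an SBP stiffness matrix `S`, the skew part of the volume term
reduces to boundary potential terms plus a source term. -/
theorem entropy_conservative_flux_identity (k : ℕ) {α : Type*}
    (V : α → Fin 8 → ℝ) (ψ φ Bx : α → ℝ)
    (FS : α → α → Fin 8 → ℝ)
    (hsym : ∀ a b, FS a b = FS b a)
    (hEC : ∀ a b, ∑ i, (V b i - V a i) * FS a b i
      = (ψ b - ψ a) - (φ b - φ a) * ((Bx b + Bx a) / 2))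
    (U : Fin (k+2) → α)
    (S : Matrix (Fin (k+2)) (Fin (k+2)) ℝ)
    (τ : Fin (k+2) → ℝ)
    (hτ : τ = fun j => if j = 0 then (-1:ℝ) else if j = Fin.last (k+1) then 1 else 0)
    (hSBP : ∀ i l, S i l + S l i = if i = l then τ i else 0)
    (hrow : ∀ i, ∑ l, S i l = 0)
    (hcol : ∀ l, ∑ i, S i l = τ l) :
    ∑ i₁, ∑ l, (S i₁ l - S l i₁) * (∑ c, V (U i₁) c * FS (U i₁) (U l) c)
      = -(∑ i₁, τ i₁ * ψ (U i₁))
        - (∑ i₁, ∑ l, φ (U i₁) * Bx (U l) * S i₁ l)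
        + ∑ i₁, τ i₁ * φ (U i₁) * Bx (U i₁) := by
  classical
  -- abbreviations
  let p : Fin (k+2) → ℝ := fun i => ψ (U i)
  let f : Fin (k+2) → ℝ := fun i => φ (U i)
  let b : Fin (k+2) → ℝ := fun i => Bx (U i)
  let A : Fin (k+2) → Fin (k+2) → ℝ := fun i l => ∑ c, V (U i) c * FS (U i) (U l) c
  -- entropy conservation in nodal form
  have key : ∀ i l : Fin (k+2),
      A l i - A i l = (p l - p i) - (f l - f i) * ((b l + b i) / 2) := by
    intro i l
    have h2 : A l i = ∑ c, V (U l) c * FS (U i) (U l) c := by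
      simp only [A, hsym (U l) (U i)]
    calc A l i - A i l
        = ∑ c, (V (U l) c - V (U i) c) * FS (U i) (U l) c := by
          rw [h2]
          rw [← Finset.sum_sub_distrib]
          exact Finset.sum_congr rfl (fun c _ => by ring)
      _ = (p l - p i) - (f l - f i) * ((b l + b i) / 2) := hEC (U i) (U l)
  -- rewrite the LHS using the skew-symmetry trick
  have lhs_eq : ∑ i₁, ∑ l, (S i₁ l - S l i₁) * A i₁ l
      = -∑ i₁, ∑ l, S i₁ l * (A l i₁ - A i₁ l) := by
    simp only [sub_mul, mul_sub, Finset.sum_sub_distrib, neg_sub]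
    congr 1
    exact Finset.sum_comm ..
  -- basic double-sum identities
  have h1 : ∑ i, ∑ l, S i l * p l = ∑ l, τ l * p l := by
    rw [Finset.sum_comm]
    exact Finset.sum_congr rfl fun l _ => by rw [← Finset.sum_mul, hcol]
  have h2 : ∑ i : Fin (k+2), ∑ l, S i l * p i = 0 :=
    Finset.sum_eq_zero fun i _ => by rw [← Finset.sum_mul, hrow, zero_mul]
  have h3 : ∑ i, ∑ l, S i l * (f l * b l) = ∑ l, τ l * (f l * b l) := by
    rw [Finset.sum_comm]
    exact Finset.sum_congr rfl fun l _ => by rw [← Finset.sum_mul, hcol]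
  have h4 : ∑ i : Fin (k+2), ∑ l, S i l * (f i * b i) = 0 :=
    Finset.sum_eq_zero fun i _ => by rw [← Finset.sum_mul, hrow, zero_mul]
  have hS : ∀ i l, S i l = (if i = l then τ i else 0) - S l i := by
    intro i l
    have := hSBP i l
    linarith
  have h5 : ∑ i, ∑ l, S i l * (f l * b i)
      = ∑ l, τ l * (f l * b l) - ∑ i, ∑ l, S i l * (f i * b l) := by
    have step1 : ∑ i, ∑ l, S i l * (f l * b i)
        = (∑ i, ∑ l, (if i = l then τ i else 0) * (f l * b i))
          - ∑ i, ∑ l, S l i * (f l * b i) := by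
      rw [← Finset.sum_sub_distrib]
      refine Finset.sum_congr rfl fun i _ => ?_
      rw [← Finset.sum_sub_distrib]
      refine Finset.sum_congr rfl fun l _ => ?_
      rw [hS i l]; ring
    have step2 : (∑ i, ∑ l, (if i = l then τ i else 0) * (f l * b i))
        = ∑ l, τ l * (f l * b l) := by
      refine Finset.sum_congr rfl fun i _ => ?_
      simp
    have step3 : ∑ i, ∑ l, S l i * (f l * b i)
        = ∑ i, ∑ l, S i l * (f i * b l) := Finset.sum_comm ..
    rw [step1, step2, step3]
  -- expand the summand
  have expand : ∀ i l : Fin (k+2),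
      S i l * ((p l - p i) - (f l - f i) * ((b l + b i) / 2))
        = S i l * p l - S i l * p i
          - (S i l * (f l * b l) + S i l * (f l * b i)
              - S i l * (f i * b l) - S i l * (f i * b i)) / 2 := by
    intro i l; ring
  -- normalize the RHS sums
  have r1 : ∑ i₁, ∑ l, φ (U i₁) * Bx (U l) * S i₁ l
      = ∑ i, ∑ l, S i l * (f i * b l) :=
    Finset.sum_congr rfl fun i _ => Finset.sum_congr rfl fun l _ => by
      show φ (U i) * Bx (U l) * S i l = S i l * (φ (U i) * Bx (U l)); ring
  have r2 : ∑ i₁, τ i₁ * φ (U i₁) * Bx (U i₁) = ∑ i, τ i * (f i * b i) :=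
    Finset.sum_congr rfl fun i _ => by
      show τ i * φ (U i) * Bx (U i) = τ i * (φ (U i) * Bx (U i)); ring
  have r0 : ∑ i₁, τ i₁ * ψ (U i₁) = ∑ i, τ i * p i := rfl
  rw [show (∑ i₁, ∑ l, (S i₁ l - S l i₁) * (∑ c, V (U i₁) c * FS (U i₁) (U l) c))
      = ∑ i₁, ∑ l, (S i₁ l - S l i₁) * A i₁ l from rfl, lhs_eq, r1, r2, r0]
  have main : ∑ i₁, ∑ l, S i₁ l * (A l i₁ - A i₁ l)
      = (∑ i, ∑ l, S i l * p l) - (∑ i, ∑ l, S i l * p i)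
        - ((∑ i, ∑ l, S i l * (f l * b l)) + (∑ i, ∑ l, S i l * (f l * b i))
            - (∑ i, ∑ l, S i l * (f i * b l)) - (∑ i, ∑ l, S i l * (f i * b i))) / 2 := by
    simp only [key, expand, Finset.sum_sub_distrib, Finset.sum_add_distrib, ← Finset.sum_div]
  rw [main, h1, h2, h3, h4, h5]
  ring
end

section
/- Let $\mathcal U(\mathbf U)=-\rho s/(\gamma-1)$ with $s=\ln(p\rho^{-\gamma})$, where $p=(\gamma-1)(\mathcal E-\frac{\|\mathbf m\|^2}{2\rho}-\frac{\|\mathbf B\|^2}{2})$ and $\mathbf U=(\rho,\mathbf m,\mathcal E,\mathbf B)$ with $\mathbf m=\rho\mathbf u$. On the set where $\rho>0$ and $p>0$, the gradient of $\mathcal U$ with respect to the conservative variables is $\mathbf V=\left(\frac{\gamma-s}{\gamma-1}-\beta\|\mathbf u\|^2,\ 2\beta\mathbf u,\ -2\beta,\ 2\beta\mathbf B\right)$, where $\beta=\rho/(2p)$. -/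
/-!
Since `s = log p - γ log ρ`, the product rule gives `d(ρ s) = (s - γ) dρ + (ρ / p) dp`, and
differentiating the pressure gives `dp = (γ - 1) (‖u‖²/2 dρ - u · dm + dℰ - B · dB)`.
Substituting the second identity into the first and writing `β = ρ / (2p)` yields
`d𝒰 = -d(ρ s)/(γ - 1) = V · dU`.
-/

/-- Pressure as a function of the conservative variables
`U = (ρ, m, ℰ, B) ∈ ℝ⁸`. -/
noncomputable def mhdPressure (γ : ℝ) (U : Fin 8 → ℝ) : ℝ :=
  (γ - 1) * (U 4 - (U 1 ^ 2 + U 2 ^ 2 + U 3 ^ 2) / (2 * U 0)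
    - (U 5 ^ 2 + U 6 ^ 2 + U 7 ^ 2) / 2)

/-- The entropy function `𝒰(U) = -ρ s/(γ-1)` with `s = ln(p ρ^{-γ})`. -/
noncomputable def mhdEntropy (γ : ℝ) (U : Fin 8 → ℝ) : ℝ :=
  -(U 0 * Real.log (mhdPressure γ U * U 0 ^ (-γ))) / (γ - 1)

section

variable {E : Type*} [NormedAddCommGroup E] [NormedSpace ℝ E] {ρ p : E → ℝ}
  {ρ' p' : E →L[ℝ] ℝ} {x : E}

theorem HasFDerivAt.mul_log_mul_rpow_neg (hρ : HasFDerivAt ρ ρ' x) (hp : HasFDerivAt p p' x)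
    (hρx : 0 < ρ x) (hpx : 0 < p x) (γ : ℝ) :
    HasFDerivAt (fun y => ρ y * Real.log (p y * ρ y ^ (-γ)))
      ((Real.log (p x * ρ x ^ (-γ)) - γ) • ρ' + (ρ x / p x) • p') x := by
  have hsplit : (fun y => ρ y * (Real.log (p y) - γ * Real.log (ρ y))) =ᶠ[nhds x]
      fun y => ρ y * Real.log (p y * ρ y ^ (-γ)) := by
    filter_upwards [hρ.continuousAt.eventually (lt_mem_nhds hρx),
      hp.continuousAt.eventually (lt_mem_nhds hpx)] with y hρy hpy
    rw [Real.log_mul hpy.ne' (Real.rpow_pos_of_pos hρy _).ne', Real.log_rpow hρy]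
    ring
  refine (hρ.mul ((hp.log hpx.ne').sub ((hρ.log hρx.ne').const_mul γ))).congr_of_eventuallyEq
    hsplit.symm |>.congr_fderiv ?_
  rw [Real.log_mul hpx.ne' (Real.rpow_pos_of_pos hρx _).ne', Real.log_rpow hρx]
  ext v
  simp only [Pi.sub_apply, add_apply, smul_apply, sub_apply, smul_eq_mul]
  field_simp
  ring

end

def dotCLM {ι : Type*} [Fintype ι] (v : ι → ℝ) : (ι → ℝ) →L[ℝ] ℝ :=
  ∑ i, v i • ContinuousLinearMap.proj i

@[simp]
theorem dotCLM_apply {ι : Type*} [Fintype ι] (v w : ι → ℝ) :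
    dotCLM v w = ∑ i, v i * w i := by
  simp [dotCLM]

noncomputable def mhdPressureGrad (γ : ℝ) (U : Fin 8 → ℝ) : Fin 8 → ℝ :=
  (γ - 1) • ![((U 1 / U 0) ^ 2 + (U 2 / U 0) ^ 2 + (U 3 / U 0) ^ 2) / 2,
    -(U 1 / U 0), -(U 2 / U 0), -(U 3 / U 0), 1, -U 5, -U 6, -U 7]

theorem hasFDerivAt_mhdPressure (γ : ℝ) {U : Fin 8 → ℝ} (hρ : U 0 ≠ 0) :
    HasFDerivAt (mhdPressure γ) (dotCLM (mhdPressureGrad γ U)) U := by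
  have coord (i : Fin 8) := hasFDerivAt_apply (𝕜 := ℝ) (F' := fun _ : Fin 8 => ℝ) i U
  have sq (i : Fin 8) := (hasDerivAt_pow 2 (U i)).comp_hasFDerivAt U (coord i)
  have hinv := (hasDerivAt_inv (mul_ne_zero two_ne_zero hρ)).comp_hasFDerivAt U
    ((coord 0).const_mul 2)
  refine (((coord 4).sub (((sq 1).add (sq 2)).add (sq 3) |>.mul hinv)).sub
    (((sq 5).add (sq 6)).add (sq 7) |>.mul_const (2 : ℝ)⁻¹) |>.const_mul (γ - 1)).congr_fderiv ?_
  ext v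
  simp only [mhdPressureGrad, dotCLM_apply, Fin.sum_univ_eight, Matrix.smul_cons,
    Matrix.smul_empty, Matrix.cons_val_zero, Matrix.cons_val_one, Matrix.cons_val,
    Function.comp_apply, Pi.add_apply, add_apply, sub_apply, smul_apply,
    ContinuousLinearMap.proj_apply, smul_eq_mul, Nat.cast_ofNat, Nat.add_one_sub_one, pow_one]
  field_simp
  ring

theorem mhd_entropy_gradient_general (γ : ℝ)
    (U : Fin 8 → ℝ) (hρ : 0 < U 0) (hp : 0 < mhdPressure γ U)
    (V : Fin 8 → ℝ)
    (hV : V =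
      let ρ := U 0
      let p := mhdPressure γ U
      let s := Real.log (p * ρ ^ (-γ))
      let β := ρ / (2 * p)
      let ux := U 1 / ρ
      let uy := U 2 / ρ
      let uz := U 3 / ρ
      ![(γ - s) / (γ - 1) - β * (ux^2 + uy^2 + uz^2),
        2 * β * ux, 2 * β * uy, 2 * β * uz,
        -(2 * β),
        2 * β * U 5, 2 * β * U 6, 2 * β * U 7]) :
    ∃ L : (Fin 8 → ℝ) →L[ℝ] ℝ,
      HasFDerivAt (mhdEntropy γ) L U ∧ ∀ W, L W = ∑ i, V i * W i := by
  have hγ : γ - 1 ≠ 0 := left_ne_zero_of_mul hp.ne'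
  have hρU := hasFDerivAt_apply (𝕜 := ℝ) (F' := fun _ : Fin 8 => ℝ) 0 U
  have hU := (hρU.mul_log_mul_rpow_neg (hasFDerivAt_mhdPressure γ hρ.ne') hρ hp γ).neg.mul_const
    (γ - 1)⁻¹
  refine ⟨dotCLM V, hU.congr_fderiv ?_, dotCLM_apply V⟩
  ext W
  subst hV
  simp only [mhdPressureGrad, dotCLM_apply, Fin.sum_univ_eight, Matrix.smul_cons,
    Matrix.smul_empty, Matrix.cons_val_zero, Matrix.cons_val_one, Matrix.cons_val,
    add_apply, neg_apply, smul_apply, ContinuousLinearMap.proj_apply, smul_eq_mul]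
  field_simp
  ring

/-- The gradient of the MHD entropy `𝒰 = -ρ s/(γ-1)` with respect to the
conservative variables is the entropy-variable vector
`V = ((γ-s)/(γ-1) - β‖u‖², 2βu, -2β, 2βB)` with `β = ρ/(2p)`, `u = m/ρ`. -/
theorem mhd_entropy_gradient (γ : ℝ) (hγ : 1 < γ)
    (U : Fin 8 → ℝ) (hρ : 0 < U 0) (hp : 0 < mhdPressure γ U)
    (V : Fin 8 → ℝ)
    (hV : V =
      let ρ := U 0
      let p := mhdPressure γ U
      let s := Real.log (p * ρ ^ (-γ))
      let β := ρ / (2 * p)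
      let ux := U 1 / ρ
      let uy := U 2 / ρ
      let uz := U 3 / ρ
      ![(γ - s) / (γ - 1) - β * (ux^2 + uy^2 + uz^2),
        2 * β * ux, 2 * β * uy, 2 * β * uz,
        -(2 * β),
        2 * β * U 5, 2 * β * U 6, 2 * β * U 7]) :
    ∃ L : (Fin 8 → ℝ) →L[ℝ] ℝ,
      HasFDerivAt (mhdEntropy γ) L U ∧ ∀ W, L W = ∑ i, V i * W i :=
  mhd_entropy_gradient_general γ U hρ hp V hV
end

section
/- Let $\mathcal U(\rho,p)=-\frac{\rho}{\gamma-1}\ln(p\rho^{-\gamma})$ be expressed in conservative variables $\mathbf U=(\rho,\mathbf m,\mathcal E,\mathbf B)$ via $p=(\gamma-1)(\mathcal E-\frac{\|\mathbf m\|^2}{2\rho}-\frac{\|\mathbf B\|^2}{2})$. Then $\mathcal U$ is a convex function of $\mathbf U$ on the open set $\{\rho>0,\ p>0\}$. -/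
set_option maxHeartbeats 1000000

/-- Internal energy in conservative variables. -/
noncomputable def mhdEint (U : Fin 8 → ℝ) : ℝ :=
  U 4 - (U 1 ^ 2 + U 2 ^ 2 + U 3 ^ 2) / (2 * U 0) - (U 5 ^ 2 + U 6 ^ 2 + U 7 ^ 2) / 2

/-- Perspective-of-square inequality. -/
lemma mhd_sq_div_add (P Q c d : ℝ) (hc : 0 < c) (hd : 0 < d) :
    (P + Q) ^ 2 / (c + d) ≤ P ^ 2 / c + Q ^ 2 / d := by
  rw [div_add_div _ _ hc.ne' hd.ne', div_le_div_iff₀ (by positivity) (by positivity)]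
  nlinarith [sq_nonneg (P * d - Q * c), mul_pos hc hd]

/-- Log-sum key step: `x log u + x - y u ≤ x log (x/y)`. -/
lemma mhd_log_step (x y u : ℝ) (hx : 0 < x) (hy : 0 < y) (hu : 0 < u) :
    x * Real.log u + x - y * u ≤ x * Real.log (x / y) := by
  have h3 := Real.log_le_sub_one_of_pos (show (0:ℝ) < y * u / x by positivity)
  have h2 : Real.log (y * u / x) = Real.log y + Real.log u - Real.log x := by
    rw [Real.log_div (by positivity) hx.ne', Real.log_mul hy.ne' hu.ne']
  rw [h2] at h3
  have h4 : x * (Real.log y + Real.log u - Real.log x) ≤ x * (y * u / x - 1) :=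
    mul_le_mul_of_nonneg_left h3 hx.le
  have h5 : x * (y * u / x - 1) = y * u - x := by field_simp
  rw [Real.log_div hx.ne' hy.ne']
  nlinarith [h4, h5]

/-- Two-term log-sum inequality. -/
lemma mhd_log_sum (c d e f : ℝ) (hc : 0 < c) (hd : 0 < d) (he : 0 < e) (hf : 0 < f) :
    (c + d) * Real.log ((c + d) / (e + f)) ≤ c * Real.log (c / e) + d * Real.log (d / f) := by
  have hu : 0 < (c + d) / (e + f) := by positivity
  have h1 := mhd_log_step c e ((c + d) / (e + f)) hc he hu
  have h2 := mhd_log_step d f ((c + d) / (e + f)) hd hf hu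
  have h3 : (e + f) * ((c + d) / (e + f)) = c + d := by field_simp
  nlinarith [h1, h2]

/-- Scalar convexity core for
`F ρ e = (γ ρ log ρ - ρ log e - ρ log (γ-1)) / (γ-1)`. -/
lemma mhd_scalar_main (γ ρ1 ρ2 e1 e2 et a b : ℝ) (hγ : 1 < γ)
    (h1 : 0 < ρ1) (h2 : 0 < ρ2) (he1 : 0 < e1) (he2 : 0 < e2)
    (ha : 0 < a) (hb : 0 < b) (hab : a + b = 1) (het : a * e1 + b * e2 ≤ et) :
    (γ * (a * ρ1 + b * ρ2) * Real.log (a * ρ1 + b * ρ2)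
      - (a * ρ1 + b * ρ2) * Real.log et
      - (a * ρ1 + b * ρ2) * Real.log (γ - 1)) / (γ - 1)
    ≤ a * ((γ * ρ1 * Real.log ρ1 - ρ1 * Real.log e1 - ρ1 * Real.log (γ - 1)) / (γ - 1))
      + b * ((γ * ρ2 * Real.log ρ2 - ρ2 * Real.log e2 - ρ2 * Real.log (γ - 1)) / (γ - 1)) := by
  have hγ1 : 0 < γ - 1 := by linarith
  have hρtpos : 0 < a * ρ1 + b * ρ2 := by positivity
  have hept : 0 < a * e1 + b * e2 := by positivity
  have hetpos : 0 < et := lt_of_lt_of_le hept het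
  have hmono : -((a * ρ1 + b * ρ2) * Real.log et)
      ≤ -((a * ρ1 + b * ρ2) * Real.log (a * e1 + b * e2)) := by
    have := Real.log_le_log hept het
    nlinarith [this]
  have hA := mhd_log_sum (a * ρ1) (b * ρ2) (a * e1) (b * e2)
    (by positivity) (by positivity) (by positivity) (by positivity)
  rw [mul_div_mul_left _ _ ha.ne', mul_div_mul_left _ _ hb.ne'] at hA
  have hB := mhd_log_sum (a * ρ1) (b * ρ2) a b (by positivity) (by positivity) ha hb
  rw [hab, div_one, mul_div_cancel_left₀ _ ha.ne', mul_div_cancel_left₀ _ hb.ne'] at hB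
  rw [Real.log_div hρtpos.ne' hept.ne'] at hA
  rw [Real.log_div h1.ne' he1.ne'] at hA
  rw [Real.log_div h2.ne' he2.ne'] at hA
  have hC := mul_le_mul_of_nonneg_left hB hγ1.le
  have key : γ * (a * ρ1 + b * ρ2) * Real.log (a * ρ1 + b * ρ2)
      - (a * ρ1 + b * ρ2) * Real.log et
      - (a * ρ1 + b * ρ2) * Real.log (γ - 1)
      ≤ a * (γ * ρ1 * Real.log ρ1 - ρ1 * Real.log e1 - ρ1 * Real.log (γ - 1))
        + b * (γ * ρ2 * Real.log ρ2 - ρ2 * Real.log e2 - ρ2 * Real.log (γ - 1)) := by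
    nlinarith [hA, hC, hmono]
  calc (γ * (a * ρ1 + b * ρ2) * Real.log (a * ρ1 + b * ρ2)
      - (a * ρ1 + b * ρ2) * Real.log et
      - (a * ρ1 + b * ρ2) * Real.log (γ - 1)) / (γ - 1)
      ≤ (a * (γ * ρ1 * Real.log ρ1 - ρ1 * Real.log e1 - ρ1 * Real.log (γ - 1))
        + b * (γ * ρ2 * Real.log ρ2 - ρ2 * Real.log e2 - ρ2 * Real.log (γ - 1))) / (γ - 1) :=
        (div_le_div_iff_of_pos_right hγ1).mpr key
    _ = _ := by ring

lemma mhdPressure_eq_eint (γ : ℝ) (U : Fin 8 → ℝ) :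
    mhdPressure γ U = (γ - 1) * mhdEint U := rfl

lemma mhdEint_pos (γ : ℝ) (hγ : 1 < γ) (U : Fin 8 → ℝ) (hp : 0 < mhdPressure γ U) :
    0 < mhdEint U := by
  rw [mhdPressure_eq_eint] at hp
  nlinarith [hp]

lemma mhdEint_concave (U V : Fin 8 → ℝ) (hU : 0 < U 0) (hV : 0 < V 0)
    (a b : ℝ) (ha : 0 < a) (hb : 0 < b) (hab : a + b = 1) :
    a * mhdEint U + b * mhdEint V ≤ mhdEint (a • U + b • V) := by
  have happ : ∀ i : Fin 8, (a • U + b • V) i = a * U i + b * V i := by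
    intro i; simp
  simp only [mhdEint, happ]
  have h0 : 0 < 2 * (a * U 0 + b * V 0) := by positivity
  have hm : ∀ p q : ℝ, (a * p + b * q) ^ 2 / (2 * (a * U 0 + b * V 0))
      ≤ a * (p ^ 2 / (2 * U 0)) + b * (q ^ 2 / (2 * V 0)) := by
    intro p q
    have := mhd_sq_div_add (a * p) (b * q) (2 * (a * U 0)) (2 * (b * V 0))
      (by positivity) (by positivity)
    have e1 : (a * p) ^ 2 / (2 * (a * U 0)) = a * (p ^ 2 / (2 * U 0)) := by
      field_simp
    have e2 : (b * q) ^ 2 / (2 * (b * V 0)) = b * (q ^ 2 / (2 * V 0)) := by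
      field_simp
    have e3 : 2 * (a * U 0) + 2 * (b * V 0) = 2 * (a * U 0 + b * V 0) := by ring
    rw [e1, e2, e3] at this
    exact this
  have hb2 : ∀ p q : ℝ, (a * p + b * q) ^ 2 ≤ a * p ^ 2 + b * q ^ 2 := by
    intro p q
    nlinarith [sq_nonneg (p - q), mul_pos ha hb]
  have h1 := hm (U 1) (V 1)
  have h2 := hm (U 2) (V 2)
  have h3 := hm (U 3) (V 3)
  have h5 := hb2 (U 5) (V 5)
  have h6 := hb2 (U 6) (V 6)
  have h7 := hb2 (U 7) (V 7)
  have key : ((a * U 1 + b * V 1) ^ 2 + (a * U 2 + b * V 2) ^ 2 + (a * U 3 + b * V 3) ^ 2)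
      / (2 * (a * U 0 + b * V 0))
      ≤ a * ((U 1 ^ 2 + U 2 ^ 2 + U 3 ^ 2) / (2 * U 0))
        + b * ((V 1 ^ 2 + V 2 ^ 2 + V 3 ^ 2) / (2 * V 0)) := by
    have expand : ∀ x y z w : ℝ, w ≠ 0 → (x + y + z) / w = x / w + y / w + z / w := by
      intro x y z w hw; field_simp
    rw [expand _ _ _ _ h0.ne', expand _ _ _ _ (show (2:ℝ) * U 0 ≠ 0 by positivity),
      expand _ _ _ _ (show (2:ℝ) * V 0 ≠ 0 by positivity)]
    nlinarith [h1, h2, h3]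
  nlinarith [key, h5, h6, h7]

lemma mhdEntropy_eq (γ : ℝ) (hγ : 1 < γ) (U : Fin 8 → ℝ)
    (h0 : 0 < U 0) (hp : 0 < mhdPressure γ U) :
    mhdEntropy γ U = (γ * U 0 * Real.log (U 0) - U 0 * Real.log (mhdEint U)
      - U 0 * Real.log (γ - 1)) / (γ - 1) := by
  have he := mhdEint_pos γ hγ U hp
  have hγ1 : (0:ℝ) < γ - 1 := by linarith
  have hrp : (0:ℝ) < U 0 ^ (-γ) := Real.rpow_pos_of_pos h0 _
  rw [mhdEntropy, Real.log_mul hp.ne' hrp.ne', Real.log_rpow h0,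
    mhdPressure_eq_eint, Real.log_mul hγ1.ne' he.ne']
  ring

lemma mhd_comb_zero (U V : Fin 8 → ℝ) : (0:ℝ) • U + (1:ℝ) • V = V := by
  funext i; simp

/-- The MHD entropy `𝒰 = -ρ s/(γ-1)` is convex as a function of the
conservative variables on the physically admissible set `{ρ > 0, p > 0}`. -/
theorem mhd_entropy_convex (γ : ℝ) (hγ : 1 < γ) :
    ConvexOn ℝ {U : Fin 8 → ℝ | 0 < U 0 ∧ 0 < mhdPressure γ U}
      (mhdEntropy γ) := by
  have hγ1 : (0:ℝ) < γ - 1 := by linarith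
  have hmem : ∀ U ∈ {U : Fin 8 → ℝ | 0 < U 0 ∧ 0 < mhdPressure γ U},
      ∀ V ∈ {U : Fin 8 → ℝ | 0 < U 0 ∧ 0 < mhdPressure γ U},
      ∀ a b : ℝ, 0 < a → 0 < b → a + b = 1 →
      (a • U + b • V) ∈ {U : Fin 8 → ℝ | 0 < U 0 ∧ 0 < mhdPressure γ U} := by
    intro U hU V hV a b ha hb hab
    obtain ⟨hU0, hUp⟩ := hU
    obtain ⟨hV0, hVp⟩ := hV
    have happ : (a • U + b • V) 0 = a * U 0 + b * V 0 := by simp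
    have hc := mhdEint_concave U V hU0 hV0 a b ha hb hab
    have heU := mhdEint_pos γ hγ U hUp
    have heV := mhdEint_pos γ hγ V hVp
    refine ⟨by rw [happ]; positivity, ?_⟩
    rw [mhdPressure_eq_eint]
    have : 0 < mhdEint (a • U + b • V) := by nlinarith [hc]
    positivity
  constructor
  · -- the set is convex
    intro U hU V hV a b ha hb hab
    rcases eq_or_lt_of_le ha with ha0 | ha
    · have hb1 : b = 1 := by linarith
      rw [← ha0, hb1, mhd_comb_zero]; exact hV
    rcases eq_or_lt_of_le hb with hb0 | hb
    · have ha1 : a = 1 := by linarith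
      have : a • U + b • V = U := by rw [← hb0, ha1]; funext i; simp
      rw [this]; exact hU
    exact hmem U hU V hV a b ha hb hab
  · -- the convexity inequality
    intro U hU V hV a b ha hb hab
    rcases eq_or_lt_of_le ha with ha0 | ha
    · have hb1 : b = 1 := by linarith
      rw [← ha0, hb1, mhd_comb_zero]; simp
    rcases eq_or_lt_of_le hb with hb0 | hb
    · have ha1 : a = 1 := by linarith
      have hUV : a • U + b • V = U := by rw [← hb0, ha1]; funext i; simp
      rw [hUV, ← hb0, ha1]; simp
    obtain ⟨hU0, hUp⟩ := hU
    obtain ⟨hV0, hVp⟩ := hV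
    obtain ⟨hW0, hWp⟩ := hmem U ⟨hU0, hUp⟩ V ⟨hV0, hVp⟩ a b ha hb hab
    have happ : (a • U + b • V) 0 = a * U 0 + b * V 0 := by simp
    have heU := mhdEint_pos γ hγ U hUp
    have heV := mhdEint_pos γ hγ V hVp
    have hc := mhdEint_concave U V hU0 hV0 a b ha hb hab
    rw [mhdEntropy_eq γ hγ _ hW0 hWp, mhdEntropy_eq γ hγ U hU0 hUp,
      mhdEntropy_eq γ hγ V hV0 hVp, happ]
    have := mhd_scalar_main γ (U 0) (V 0) (mhdEint U) (mhdEint V)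
      (mhdEint (a • U + b • V)) a b hγ hU0 hV0 heU heV ha hb hab hc
    simpa [smul_eq_mul] using this
end

section
/- Suppose $b_x^{i+1/2,j}(y,t)$ and $b_y^{i,j+1/2}(x,t)$ evolve by the semi-discrete interface DG schemes: for all test polynomials $w\in P^k$, $\frac{d}{dt}\int_{I^y} b_x w\,dy = \int_{I^y}\hat E_z\, w'\,dy - \tilde E_z^{i+1/2,j+1/2}w(y_{j+1/2}^-)+\tilde E_z^{i+1/2,j-1/2}w(y_{j-1/2}^+)$ and analogously (with opposite signs) for $b_y$, where the corner values $\tilde E_z$ are single-valued. Then the quantity $C_{ij}(t)=\Delta y(\bar b_x^{i+1/2,j}-\bar b_x^{i-1/2,j})+\Delta x(\bar b_y^{i,j+1/2}-\bar b_y^{i,j-1/2})$ satisfies $\frac{d}{dt}C_{ij}(t)=0$ for every cell; hence if the cell-average constraint $C_{ij}(0)=0$ holds initially, it holds for all times. -/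
open Polynomial intervalIntegral

/-- Preservation of the cell-average constraint by the semi-discrete interface
DG schemes for the magnetic field: for each cell,
`C_ij(t) = Δy (b̄ₓ^{i+1/2,j} - b̄ₓ^{i-1/2,j}) + Δx (b̄_y^{i,j+1/2} - b̄_y^{i,j-1/2})`
has zero time derivative; hence if it vanishes initially, it vanishes for all
times. Here `bX i j` is the field on the vertical interface `x = x_{i+1/2}`,
`y ∈ [jΔy, (j+1)Δy]`, and `bY i j` on the horizontal interface
`y = y_{j+1/2}`, `x ∈ [iΔx, (i+1)Δx]`; the vertex values `Ẽ i j` at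
`(x_{i+1/2}, y_{j+1/2})` are single-valued. -/
theorem cell_average_constraint_preserved (k : ℕ) (Δx Δy : ℝ)
    (hΔx : 0 < Δx) (hΔy : 0 < Δy)
    (bX bY : ℤ → ℤ → ℝ → ℝ → ℝ)      -- arguments: interface index pair, t, arclength variable
    (EhatX EhatY : ℤ → ℤ → ℝ → ℝ → ℝ)  -- interface electric fields Êz
    (Etil : ℤ → ℤ → ℝ → ℝ)            -- single-valued corner electric field Ẽz
    -- each interface field is a polynomial of degree ≤ k in the arclength variable
    (hbXpoly : ∀ i j t, ∃ q : Polynomial ℝ, q.natDegree ≤ k ∧ ∀ y, bX i j t y = q.eval y)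
    (hbYpoly : ∀ i j t, ∃ q : Polynomial ℝ, q.natDegree ≤ k ∧ ∀ x, bY i j t x = q.eval x)
    -- semi-discrete DG scheme for bₓ on vertical interfaces
    (hschemeX : ∀ (i j : ℤ) (t : ℝ) (w : Polynomial ℝ), w.natDegree ≤ k →
      HasDerivAt (fun τ => ∫ y in ((j : ℝ) * Δy)..(((j : ℝ) + 1) * Δy),
          bX i j τ y * w.eval y)
        ((∫ y in ((j : ℝ) * Δy)..(((j : ℝ) + 1) * Δy),
            EhatX i j t y * (Polynomial.derivative w).eval y)
          - Etil i j t * w.eval (((j : ℝ) + 1) * Δy)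
          + Etil i (j - 1) t * w.eval ((j : ℝ) * Δy)) t)
    -- semi-discrete DG scheme for b_y on horizontal interfaces
    (hschemeY : ∀ (i j : ℤ) (t : ℝ) (w : Polynomial ℝ), w.natDegree ≤ k →
      HasDerivAt (fun τ => ∫ x in ((i : ℝ) * Δx)..(((i : ℝ) + 1) * Δx),
          bY i j τ x * w.eval x)
        (-(∫ x in ((i : ℝ) * Δx)..(((i : ℝ) + 1) * Δx),
            EhatY i j t x * (Polynomial.derivative w).eval x)
          + Etil i j t * w.eval (((i : ℝ) + 1) * Δx)
          - Etil (i - 1) j t * w.eval ((i : ℝ) * Δx)) t)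
    (C : ℤ → ℤ → ℝ → ℝ)
    (hC : C = fun i j t =>
      Δy * ((1 / Δy) * (∫ y in ((j : ℝ) * Δy)..(((j : ℝ) + 1) * Δy), bX i j t y)
            - (1 / Δy) * (∫ y in ((j : ℝ) * Δy)..(((j : ℝ) + 1) * Δy), bX (i - 1) j t y))
      + Δx * ((1 / Δx) * (∫ x in ((i : ℝ) * Δx)..(((i : ℝ) + 1) * Δx), bY i j t x)
            - (1 / Δx) * (∫ x in ((i : ℝ) * Δx)..(((i : ℝ) + 1) * Δx), bY i (j - 1) t x))) :
    ∀ i j : ℤ, (∀ t : ℝ, HasDerivAt (C i j) 0 t) ∧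
      (C i j 0 = 0 → ∀ t : ℝ, C i j t = 0) := by
  intro i j
  have hone : (1 : Polynomial ℝ).natDegree ≤ k := by simp
  -- derivative facts with test function w = 1
  have hX : ∀ (i' j' : ℤ) (t : ℝ),
      HasDerivAt (fun τ => ∫ y in ((j' : ℝ) * Δy)..(((j' : ℝ) + 1) * Δy), bX i' j' τ y)
        (-(Etil i' j' t) + Etil i' (j' - 1) t) t := by
    intro i' j' t
    have h := hschemeX i' j' t 1 hone
    simpa using h
  have hY : ∀ (i' j' : ℤ) (t : ℝ),
      HasDerivAt (fun τ => ∫ x in ((i' : ℝ) * Δx)..(((i' : ℝ) + 1) * Δx), bY i' j' τ x)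
        (Etil i' j' t - Etil (i' - 1) j' t) t := by
    intro i' j' t
    have h := hschemeY i' j' t 1 hone
    simpa using h
  have hderiv : ∀ t : ℝ, HasDerivAt (C i j) 0 t := by
    intro t
    have h :=
      ((((hX i j t).const_mul (1 / Δy)).sub ((hX (i - 1) j t).const_mul (1 / Δy))).const_mul
          Δy).add
        ((((hY i j t).const_mul (1 / Δx)).sub ((hY i (j - 1) t).const_mul (1 / Δx))).const_mul
          Δx)
    have hval : Δy * ((1 / Δy) * (-(Etil i j t) + Etil i (j - 1) t)
          - (1 / Δy) * (-(Etil (i - 1) j t) + Etil (i - 1) (j - 1) t))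
        + Δx * ((1 / Δx) * (Etil i j t - Etil (i - 1) j t)
          - (1 / Δx) * (Etil i (j - 1) t - Etil (i - 1) (j - 1) t)) = 0 := by
      field_simp
      ring
    rw [hC]
    rw [hval] at h
    exact h
  refine ⟨hderiv, fun h0 t => ?_⟩
  have hconst : C i j t = C i j 0 :=
    is_const_of_deriv_eq_zero (fun x => (hderiv x).differentiableAt)
      (fun x => (hderiv x).deriv) t 0
  rw [hconst, h0]
end

section
/- Let $S\in\mathbb{R}^{(k+2)\times(k+2)}$ satisfy $\sum_l S_{i,l}=0$ for each row $i$, $\sum_i S_{i,l}=\tau_l$ for each column $l$ with $\tau=(-1,0,\dots,0,1)$. Then for any scalars $\{\phi_i\},\{B_i\}$: $\sum_{i,l} S_{i,l}(\phi_i-\phi_l)\frac{B_i+B_l}{2} = \sum_{i,l}\phi_i B_l S_{i,l} - \sum_i \tau_i\,\phi_i B_i$. -/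
/-!
Split `(φᵢ - φₗ)(Bᵢ + Bₗ) = (φᵢBᵢ - φₗBₗ) + (φᵢBₗ - φₗBᵢ)`. Against `S` the first part only sees
the row sums (zero) and the column sums (`τ`); in the second part swapping `i` and `l` turns `S`
into `S - Sᵀ = 2S - diag τ`.
-/

section SBP

variable {ι R : Type*} [Fintype ι] [CommRing R]

theorem sum_sum_mul_sub_eq_neg_of_sum_row_of_sum_col (S : ι → ι → R) (τ f : ι → R)
    (hrow : ∀ i, ∑ l, S i l = 0) (hcol : ∀ l, ∑ i, S i l = τ l) :
    ∑ i, ∑ l, S i l * (f i - f l) = -∑ i, τ i * f i := by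
  have hdiag : ∑ i, ∑ l, S i l * f i = 0 :=
    Finset.sum_eq_zero fun i _ => by rw [← Finset.sum_mul, hrow, zero_mul]
  have hoff : ∑ i, ∑ l, S i l * f l = ∑ l, τ l * f l := by
    rw [Finset.sum_comm]
    exact Finset.sum_congr rfl fun l _ => by rw [← Finset.sum_mul, hcol]
  simp only [mul_sub, Finset.sum_sub_distrib, hdiag, hoff, zero_sub]

theorem sum_sum_mul_antisymm_eq_of_add_transpose_eq_diag [DecidableEq ι]
    (S : ι → ι → R) (τ φ B : ι → R)
    (hSBP : ∀ i l, S i l + S l i = if i = l then τ i else 0) :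
    ∑ i, ∑ l, S i l * (φ i * B l - φ l * B i)
      = 2 * ∑ i, ∑ l, φ i * B l * S i l - ∑ i, τ i * φ i * B i := by
  have hswap : ∑ i, ∑ l, S i l * (φ l * B i) = ∑ i, ∑ l, S l i * (φ i * B l) :=
    Finset.sum_comm
  have hdiag : ∑ i, ∑ l, (if i = l then τ i else 0) * (φ i * B l) = ∑ i, τ i * φ i * B i := by
    simp only [ite_mul, zero_mul, Finset.sum_ite_eq, Finset.mem_univ, if_true, mul_assoc]
  calc ∑ i, ∑ l, S i l * (φ i * B l - φ l * B i)
      = ∑ i, ∑ l, (S i l - S l i) * (φ i * B l) := by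
        simp only [mul_sub, sub_mul, Finset.sum_sub_distrib, hswap]
    _ = ∑ i, ∑ l, (2 * (φ i * B l * S i l) - (if i = l then τ i else 0) * (φ i * B l)) := by
        refine Finset.sum_congr rfl fun i _ => Finset.sum_congr rfl fun l _ => ?_
        linear_combination (-(φ i * B l)) * hSBP i l
    _ = 2 * ∑ i, ∑ l, φ i * B l * S i l - ∑ i, τ i * φ i * B i := by
        simp only [Finset.sum_sub_distrib, ← Finset.mul_sum, hdiag]

end SBP

theorem sbp_source_identity_general (k : ℕ)
    (S : Matrix (Fin (k+2)) (Fin (k+2)) ℝ)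
    (τ : Fin (k+2) → ℝ)
    (hSBP : ∀ i l, S i l + S l i = if i = l then τ i else 0)
    (hrow : ∀ i, ∑ l, S i l = 0)
    (hcol : ∀ l, ∑ i, S i l = τ l)
    (φ B : Fin (k+2) → ℝ) :
    ∑ i, ∑ l, S i l * (φ i - φ l) * ((B i + B l) / 2)
      = (∑ i, ∑ l, φ i * B l * S i l) - ∑ i, τ i * φ i * B i := by
  have hsplit : ∀ i l, S i l * (φ i - φ l) * ((B i + B l) / 2)
      = (S i l * (φ i * B i - φ l * B l) + S i l * (φ i * B l - φ l * B i)) / 2 :=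
    fun i l => by ring
  simp only [hsplit, ← Finset.sum_div, Finset.sum_add_distrib]
  rw [sum_sum_mul_sub_eq_neg_of_sum_row_of_sum_col S τ (fun i => φ i * B i) hrow hcol,
    sum_sum_mul_antisymm_eq_of_add_transpose_eq_diag S τ φ B hSBP]
  simp only [mul_assoc]
  ring

/-- Core algebraic identity in the proof of entropy conservation: for an SBP
stiffness matrix `S` (with `S + Sᵀ = diag τ`, zero row sums, and column sums
`τ`), and arbitrary nodal scalars `φ`, `B`,
`∑ S_{il} (φᵢ - φ_l)(Bᵢ + B_l)/2 = ∑ φᵢ B_l S_{il} - ∑ τᵢ φᵢ Bᵢ`. -/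
theorem sbp_source_identity (k : ℕ)
    (S : Matrix (Fin (k+2)) (Fin (k+2)) ℝ)
    (τ : Fin (k+2) → ℝ)
    (hτ : τ = fun j => if j = 0 then (-1:ℝ) else if j = Fin.last (k+1) then 1 else 0)
    (hSBP : ∀ i l, S i l + S l i = if i = l then τ i else 0)
    (hrow : ∀ i, ∑ l, S i l = 0)
    (hcol : ∀ l, ∑ i, S i l = τ l)
    (φ B : Fin (k+2) → ℝ) :
    ∑ i, ∑ l, S i l * (φ i - φ l) * ((B i + B l) / 2)
      = (∑ i, ∑ l, φ i * B l * S i l) - ∑ i, τ i * φ i * B i :=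
  sbp_source_identity_general k S τ hSBP hrow hcol φ B
end
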